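/- Let L : L²([0,1]) → L²([0,1]) be a compact bounded linear operator that is integral-preserving. Then L has a nontrivial fixed point: there exists g ∈ L²([0,1]) with g ≠ 0 and L g = g. -/

import Mathlib

open MeasureTheory

/-!
An integral-preserving `L` leaves the functional `g ↦ ∫ g = ⟪1, g⟫` invariant, so the range of
`L - 1` lies in its kernel and `L - 1` is not surjective: `1` is in the spectrum of `L`. For a
compact operator every nonzero point of the spectrum is an eigenvalue (Fredholm alternative).
-/

/-- Lebesgue measure restricted to the unit interval `[0,1]`. -/
noncomputable def μ01 : Measure ℝ := volume.restrict (Set.Icc (0 : ℝ) 1)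

theorem spectrum.one_mem_of_dual_comp_eq {𝕜 X : Type*} [NontriviallyNormedField 𝕜]
    [NormedAddCommGroup X] [NormedSpace 𝕜 X] {T : X →L[𝕜] X} {f : Module.Dual 𝕜 X}
    (hf : f ≠ 0) (hfT : ∀ x, f (T x) = f x) : (1 : 𝕜) ∈ spectrum 𝕜 T := by
  intro hres
  rw [spectrum.mem_resolventSet_iff, map_one] at hres
  apply hf
  ext x
  obtain ⟨y, rfl⟩ := (ContinuousLinearMap.isHomeomorph_of_isUnit hres).surjective x
  simp [hfT]

theorem IsCompactOperator.exists_ne_zero_apply_eq_self_of_dual_comp_eq {𝕜 X : Type*}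
    [NontriviallyNormedField 𝕜] [NormedAddCommGroup X] [NormedSpace 𝕜 X] [CompleteSpace X]
    {T : X →L[𝕜] X} (hT : IsCompactOperator T) {f : Module.Dual 𝕜 X}
    (hf : f ≠ 0) (hfT : ∀ x, f (T x) = f x) : ∃ x, x ≠ 0 ∧ T x = x := by
  obtain ⟨x, hx, hx0⟩ := ((hT.hasEigenvalue_iff_mem_spectrum one_ne_zero).mpr
    (spectrum.one_mem_of_dual_comp_eq hf hfT)).exists_hasEigenvector
  exact ⟨x, hx0, by simpa using Module.End.mem_eigenspace_iff.mp hx⟩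

namespace MeasureTheory.L2

variable {α 𝕜 : Type*} [RCLike 𝕜] [MeasurableSpace α] {μ : Measure α} [IsFiniteMeasure μ]

theorem inner_const_one (f : Lp 𝕜 2 μ) : inner 𝕜 (Lp.const 2 μ (1 : 𝕜)) f = ∫ x, f x ∂μ := by
  rw [← indicatorConstLp_univ, inner_indicatorConstLp_one, Measure.restrict_univ]

theorem inner_const_one_self :
    inner 𝕜 (Lp.const 2 μ (1 : 𝕜)) (Lp.const 2 μ (1 : 𝕜)) = μ.real Set.univ := by
  rw [inner_const_one, integral_congr_ae (Lp.coeFn_const ..)]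
  simp [RCLike.real_smul_eq_coe_mul]

end MeasureTheory.L2

theorem IsCompactOperator.exists_ne_zero_apply_eq_self_of_integral_eq {α 𝕜 : Type*} [RCLike 𝕜]
    [MeasurableSpace α] {μ : Measure α} [IsFiniteMeasure μ] [NeZero μ]
    {L : Lp 𝕜 2 μ →L[𝕜] Lp 𝕜 2 μ} (hL : IsCompactOperator L)
    (hint : ∀ g : Lp 𝕜 2 μ, ∫ x, L g x ∂μ = ∫ x, g x ∂μ) :
    ∃ g : Lp 𝕜 2 μ, g ≠ 0 ∧ L g = g := by
  let one : Lp 𝕜 2 μ := Lp.const 2 μ 1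
  refine hL.exists_ne_zero_apply_eq_self_of_dual_comp_eq (f := innerSL 𝕜 one) ?_ ?_
  · intro h
    have := LinearMap.congr_fun h one
    simp only [ContinuousLinearMap.coe_coe, innerSL_apply_apply, L2.inner_const_one_self,
      LinearMap.zero_apply, RCLike.ofReal_eq_zero, one] at this
    exact measureReal_univ_pos.ne' this
  · simpa [one, L2.inner_const_one] using hint

instance : IsProbabilityMeasure μ01 :=
  ⟨by simp [μ01]⟩

theorem compact_integral_preserving_has_fixed_point
    (L : Lp ℝ 2 μ01 →L[ℝ] Lp ℝ 2 μ01)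
    (hcomp : IsCompactOperator L)
    (hint : ∀ g : Lp ℝ 2 μ01, ∫ x, (L g) x ∂μ01 = ∫ x, g x ∂μ01) :
    ∃ g : Lp ℝ 2 μ01, g ≠ 0 ∧ L g = g :=
  hcomp.exists_ne_zero_apply_eq_self_of_integral_eq hint
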